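/- arXiv:2504.01223 — 2 statements merged into one kernel-verified Lean document; each statement's English description precedes it below -/
import Mathlib

section
/- Let Z be a real-valued random variable with CDF F_Z, and let {r_s}_{s>0} be a family of continuous, nondecreasing, globally Lipschitz functions ℝ → ℝ with r_s(z) → 0 as z → −∞ and r_s(z) → 1 as z → ∞ for each s. Suppose lim_{s→∞} r_s(z) = H(z) = 1_{z>0} for all z ∈ ℝ \ {0}, while lim_{s→∞} r_s(0) = r0 > 0. Then the relaxed CDFs F_Z^{(s)}(t) := 1 − E[r_s(Z − t)] satisfy lim_{s→∞} F_Z^{(s)}(t) = F_Z(t) − r0 · P(Z = t) for every t ∈ ℝ; consequently lim_{s→∞} F_Z^{(s)}(t) = F_Z(t) holds at a point t if and only if t is a point of continuity of F_Z. -/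
open MeasureTheory Set Filter

/-!
Pushing `P` forward along `Z` reduces everything to a probability measure `μ` on `ℝ`. Since each
`r s` is monotone with limits `0` and `1`, it takes values in `[0, 1]`, so dominated convergence
applies to `∫ r s (x - t) dμ(x)`: the integrand converges to `1` on `{x > t}`, to `0` on `{x < t}`
and to `r0` at `x = t`. The limit is `μ (t, ∞) + r0 μ {t} = 1 - F(t) + r0 μ {t}`, and as `r0 ≠ 0`
it equals `1 - F(t)` exactly when `μ` has no atom at `t`, i.e. when the CDF is continuous at `t`.
-/

open scoped Topology
open ProbabilityTheory

theorem mem_Icc_of_monotone_of_tendsto {β : Type*} [TopologicalSpace β] [Preorder β]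
    [ClosedIciTopology β] [ClosedIicTopology β] {f : ℝ → β} {a b : β} (hf : Monotone f)
    (ha : Tendsto f atBot (𝓝 a)) (hb : Tendsto f atTop (𝓝 b)) (z : ℝ) : f z ∈ Icc a b :=
  ⟨le_of_tendsto ha ((eventually_le_atBot z).mono fun _ hy => hf hy),
    ge_of_tendsto hb ((eventually_ge_atTop z).mono fun _ hy => hf hy)⟩

section Stieltjes

variable {R : Type*} [LinearOrder R] [TopologicalSpace R] [OrderTopology R] [CompactIccSpace R]
  [MeasurableSpace R] [BorelSpace R] [SecondCountableTopology R] [DenselyOrdered R]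

theorem StieltjesFunction.continuousAt_iff_measure_singleton_eq_zero
    (f : StieltjesFunction R) (x : R) : ContinuousAt f x ↔ f.measure {x} = 0 := by
  rw [f.mono.continuousAt_iff_leftLim_eq_rightLim, f.rightLim_eq, f.measure_singleton,
    ENNReal.ofReal_eq_zero, sub_nonpos]
  exact ⟨fun h => h.ge, fun h => le_antisymm (f.mono.leftLim_le le_rfl) h⟩

end Stieltjes

namespace ProbabilityTheory

variable (μ : Measure ℝ) [IsProbabilityMeasure μ]

theorem continuousAt_cdf_iff (x : ℝ) : ContinuousAt (cdf μ) x ↔ μ {x} = 0 := by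
  rw [(cdf μ).continuousAt_iff_measure_singleton_eq_zero, measure_cdf]

theorem measureReal_Ioi_eq_one_sub_cdf (x : ℝ) : μ.real (Ioi x) = 1 - cdf μ x := by
  rw [← compl_Iic, measureReal_compl measurableSet_Iic, probReal_univ, cdf_eq_real]

end ProbabilityTheory

theorem tendsto_integral_comp_sub_of_tendsto_heaviside {ι : Type*} {l : Filter ι}
    [l.IsCountablyGenerated] (μ : Measure ℝ) [IsFiniteMeasure μ] {r : ι → ℝ → ℝ} {C r0 : ℝ}
    (hmeas : ∀ᶠ s in l, Measurable (r s)) (hbdd : ∀ᶠ s in l, ∀ z, ‖r s z‖ ≤ C)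
    (hH : ∀ z ≠ 0, Tendsto (fun s => r s z) l (𝓝 (if 0 < z then 1 else 0)))
    (hH0 : Tendsto (fun s => r s 0) l (𝓝 r0)) (t : ℝ) :
    Tendsto (fun s => ∫ x, r s (x - t) ∂μ) l (𝓝 (μ.real (Ioi t) + r0 * μ.real {t})) := by
  let g : ℝ → ℝ := fun x =>
    (Ioi t).indicator (fun _ => 1) x + ({t} : Set ℝ).indicator (fun _ => r0) x
  have hg : ∫ x, g x ∂μ = μ.real (Ioi t) + r0 * μ.real {t} := by
    rw [integral_add ((integrable_const 1).indicator measurableSet_Ioi)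
      ((integrable_const r0).indicator (measurableSet_singleton t)),
      integral_indicator_const _ measurableSet_Ioi,
      integral_indicator_const _ (measurableSet_singleton t), smul_eq_mul, smul_eq_mul, mul_one,
      mul_comm]
  have hlim : ∀ x, Tendsto (fun s => r s (x - t)) l (𝓝 (g x)) := by
    intro x
    rcases lt_trichotomy x t with hx | rfl | hx
    · simpa [g, hx.ne, hx.le, (sub_neg.2 hx).not_gt] using hH _ (sub_ne_zero.2 hx.ne)
    · simpa [g] using hH0
    · simpa [g, hx, hx.ne', sub_pos.2 hx] using hH _ (sub_ne_zero.2 hx.ne')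
  rw [← hg]
  refine tendsto_integral_filter_of_dominated_convergence (fun _ => C) ?_ ?_
    (integrable_const C) (ae_of_all _ hlim)
  · exact hmeas.mono fun s hs => (hs.comp (measurable_sub_const t)).aestronglyMeasurable
  · exact hbdd.mono fun s hs => ae_of_all _ fun x => hs _

noncomputable def relaxedCDF (μ : Measure ℝ) (ρ : ℝ → ℝ) (t : ℝ) : ℝ :=
  1 - ∫ x, ρ (x - t) ∂μ

section RelaxedCDF

variable {ι : Type*} {l : Filter ι} (μ : Measure ℝ)
  [IsProbabilityMeasure μ] {r : ι → ℝ → ℝ} {r0 : ℝ}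

theorem tendsto_relaxedCDF [l.IsCountablyGenerated] (hmono : ∀ᶠ s in l, Monotone (r s))
    (hbot : ∀ᶠ s in l, Tendsto (r s) atBot (𝓝 0)) (htop : ∀ᶠ s in l, Tendsto (r s) atTop (𝓝 1))
    (hH : ∀ z ≠ 0, Tendsto (fun s => r s z) l (𝓝 (if 0 < z then 1 else 0)))
    (hH0 : Tendsto (fun s => r s 0) l (𝓝 r0)) (t : ℝ) :
    Tendsto (fun s => relaxedCDF μ (r s) t) l (𝓝 (cdf μ t - r0 * μ.real {t})) := by
  have hbdd : ∀ᶠ s in l, ∀ z, ‖r s z‖ ≤ 1 := by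
    filter_upwards [hmono, hbot, htop] with s hs hsb hst z
    have hz := mem_Icc_of_monotone_of_tendsto hs hsb hst z
    rw [Real.norm_eq_abs, abs_le]
    exact ⟨by linarith [hz.1], hz.2⟩
  have h := (tendsto_integral_comp_sub_of_tendsto_heaviside μ (hmono.mono fun s hs =>
    hs.measurable) hbdd hH hH0 t).const_sub 1
  rwa [measureReal_Ioi_eq_one_sub_cdf, sub_add_eq_sub_sub, sub_sub_cancel] at h

theorem tendsto_relaxedCDF_cdf_iff_continuousAt [l.NeBot] (hr0 : r0 ≠ 0) {t : ℝ}
    (h : Tendsto (fun s => relaxedCDF μ (r s) t) l (𝓝 (cdf μ t - r0 * μ.real {t}))) :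
    Tendsto (fun s => relaxedCDF μ (r s) t) l (𝓝 (cdf μ t)) ↔ ContinuousAt (cdf μ) t := by
  rw [continuousAt_cdf_iff, ← measureReal_eq_zero_iff]
  refine ⟨fun h' => ?_, fun ht => by simpa [ht] using h⟩
  simpa [hr0] using tendsto_nhds_unique h h'

end RelaxedCDF

theorem cdf_map_eq_measureReal {Ω : Type*} [MeasurableSpace Ω] (P : Measure Ω)
    [IsProbabilityMeasure P] {Z : Ω → ℝ} (hZ : Measurable Z) (u : ℝ) :
    cdf (P.map Z) u = P.real {ω | Z ω ≤ u} := by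
  have hμ := Measure.isProbabilityMeasure_map (μ := P) hZ.aemeasurable
  rw [cdf_eq_real, map_measureReal_apply hZ measurableSet_Iic]
  rfl

theorem stmt_10_general {Ω : Type*} [MeasurableSpace Ω] (P : MeasureTheory.Measure Ω)
    [MeasureTheory.IsProbabilityMeasure P]
    (Z : Ω → ℝ) (hZ : Measurable Z)
    (r : ℝ → ℝ → ℝ)
    (hrmono : ∀ s > (0 : ℝ), Monotone (r s))
    (hbot : ∀ s > (0 : ℝ), Filter.Tendsto (r s) Filter.atBot (nhds 0))
    (htop : ∀ s > (0 : ℝ), Filter.Tendsto (r s) Filter.atTop (nhds 1))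
    (hH : ∀ z : ℝ, z ≠ 0 → Filter.Tendsto (fun s => r s z) Filter.atTop
      (nhds (if 0 < z then (1 : ℝ) else 0)))
    (r0 : ℝ) (hr0pos : 0 < r0)
    (hH0 : Filter.Tendsto (fun s => r s 0) Filter.atTop (nhds r0)) :
    (∀ t : ℝ, Filter.Tendsto (fun s => 1 - ∫ ω, r s (Z ω - t) ∂P) Filter.atTop
      (nhds ((P {ω | Z ω ≤ t}).toReal - r0 * (P {ω | Z ω = t}).toReal)))
    ∧ (∀ t : ℝ, (Filter.Tendsto (fun s => 1 - ∫ ω, r s (Z ω - t) ∂P) Filter.atTop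
        (nhds ((P {ω | Z ω ≤ t}).toReal))
      ↔ ContinuousAt (fun u : ℝ => (P {ω | Z ω ≤ u}).toReal) t)) := by
  set μ := P.map Z
  have hμ : IsProbabilityMeasure μ := Measure.isProbabilityMeasure_map hZ.aemeasurable
  have hpos : ∀ᶠ s : ℝ in atTop, 0 < s := eventually_gt_atTop 0
  have hrelaxed : ∀ t, (fun s => relaxedCDF μ (r s) t) =ᶠ[atTop]
      fun s => 1 - ∫ ω, r s (Z ω - t) ∂P := fun t =>
    hpos.mono fun s hs => by
      simp only [relaxedCDF]
      rw [integral_map (f := fun x => r s (x - t)) hZ.aemeasurable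
        ((hrmono s hs).measurable.comp (measurable_sub_const t)).aestronglyMeasurable]
  have hcdf : ∀ u, cdf μ u = (P {ω | Z ω ≤ u}).toReal := cdf_map_eq_measureReal P hZ
  have hatom : ∀ t, μ.real {t} = (P {ω | Z ω = t}).toReal := fun t =>
    map_measureReal_apply hZ (measurableSet_singleton t)
  have hlim := fun t => tendsto_relaxedCDF μ (hpos.mono hrmono) (hpos.mono hbot) (hpos.mono htop)
    hH hH0 t
  refine ⟨fun t => ?_, fun t => ?_⟩
  · rw [← hcdf, ← hatom]
    exact (hlim t).congr' (hrelaxed t)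
  · rw [← hcdf, ← funext hcdf, ← tendsto_congr' (hrelaxed t)]
    exact tendsto_relaxedCDF_cdf_iff_continuousAt μ hr0pos.ne' (hlim t)

/-- If the relaxation family `r_s` converges pointwise (as `s → ∞`) to
`H(z) = 1_{z>0}` at every `z ≠ 0`, while `r_s(0) → r0 > 0`, then the relaxed CDFs
`F_Z^{(s)}(t) = 1 − E[r_s(Z − t)]` converge to `F_Z(t) − r0 · P(Z = t)` at every `t`;
consequently they converge to `F_Z(t)` at `t` iff `t` is a continuity point of `F_Z`. -/
theorem stmt_10 {Ω : Type*} [MeasurableSpace Ω] (P : MeasureTheory.Measure Ω)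
    [MeasureTheory.IsProbabilityMeasure P]
    (Z : Ω → ℝ) (hZ : Measurable Z)
    (r : ℝ → ℝ → ℝ)
    (hrcont : ∀ s > (0 : ℝ), Continuous (r s))
    (hrmono : ∀ s > (0 : ℝ), Monotone (r s))
    (hrLip : ∀ s > (0 : ℝ), ∃ K : NNReal, LipschitzWith K (r s))
    (hbot : ∀ s > (0 : ℝ), Filter.Tendsto (r s) Filter.atBot (nhds 0))
    (htop : ∀ s > (0 : ℝ), Filter.Tendsto (r s) Filter.atTop (nhds 1))
    (hH : ∀ z : ℝ, z ≠ 0 → Filter.Tendsto (fun s => r s z) Filter.atTop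
      (nhds (if 0 < z then (1 : ℝ) else 0)))
    (r0 : ℝ) (hr0pos : 0 < r0)
    (hH0 : Filter.Tendsto (fun s => r s 0) Filter.atTop (nhds r0)) :
    (∀ t : ℝ, Filter.Tendsto (fun s => 1 - ∫ ω, r s (Z ω - t) ∂P) Filter.atTop
      (nhds ((P {ω | Z ω ≤ t}).toReal - r0 * (P {ω | Z ω = t}).toReal)))
    ∧ (∀ t : ℝ, (Filter.Tendsto (fun s => 1 - ∫ ω, r s (Z ω - t) ∂P) Filter.atTop
        (nhds ((P {ω | Z ω ≤ t}).toReal))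
      ↔ ContinuousAt (fun u : ℝ => (P {ω | Z ω ≤ u}).toReal) t)) :=
  stmt_10_general P Z hZ r hrmono hbot htop hH r0 hr0pos hH0
end

section
/- Let Z0, Z1 be real-valued random variables with CDFs F_{Z0}, F_{Z1}, and let μ be a Borel probability measure on ℝ with left-continuous CDF F̃_μ. Then ∫_ℝ |F_{Z0}(t) − F_{Z1}(t)| μ(dt) = ∫_0^1 |F_{F̃_μ(Z0)}(q) − F_{F̃_μ(Z1)}(q)| dq = W_1(P_{F̃_μ(Z0)}, P_{F̃_μ(Z1)}), where P_{F̃_μ(Z_k)} denotes the law of F̃_μ(Z_k). If μ is atomless, the right-hand side equals W_1(P_{F_μ(Z0)}, P_{F_μ(Z1)}). -/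
/-!
Let `q` be the lower quantile function of `μ`: it pushes the uniform measure on `(0, 1)` forward
to `μ`, and `q u ≤ t ↔ u ≤ F_μ t`. Substituting `t = q u` turns the left-hand side into
`∫₀¹ |F_{Z0} (q u) - F_{Z1} (q u)| du`, and `F_Z (q u) = P (F̃_μ Z ≤ u)` unless `u` is an atom of
the law of `F̃_μ Z`, which happens for countably many `u` only.

For the Wasserstein distance, let `γ` be a coupling of `ν₀`, `ν₁`. For every `t`,
`|F_{ν₀} t - F_{ν₁} t| ≤ γ {(x, y) | t lies between x and y}`, and integrating in `t` gives
`∫ |x - y| dγ` by Tonelli. For the quantile coupling `u ↦ (q_{ν₀} u, q_{ν₁} u)` the events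
`{x ≤ t}` and `{y ≤ t}` are nested, so the inequality is an equality. If `μ` is atomless,
`F_μ = F̃_μ`.
-/

open MeasureTheory Set

/-- The cumulative distribution function of a Borel probability measure on `ℝ`. -/
noncomputable def mcdf (ν : MeasureTheory.Measure ℝ) (t : ℝ) : ℝ := (ν (Set.Iic t)).toReal

/-- The left-continuous version of the CDF of `ν`: `F̃_ν(t) = lim_{τ→t⁻} F_ν(τ) = ν((-∞,t))`. -/
noncomputable def mlcdf (ν : MeasureTheory.Measure ℝ) (t : ℝ) : ℝ := (ν (Set.Iio t)).toReal

/-- `γ` is a coupling of `μ` and `ν`. -/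
def IsCoupling (γ : MeasureTheory.Measure (ℝ × ℝ)) (μ ν : MeasureTheory.Measure ℝ) : Prop :=
  γ.map Prod.fst = μ ∧ γ.map Prod.snd = ν

/-- The Wasserstein-1 distance between two Borel probability measures on `ℝ`. -/
noncomputable def W1 (μ ν : MeasureTheory.Measure ℝ) : ℝ :=
  sInf { r : ℝ | ∃ γ : MeasureTheory.Measure (ℝ × ℝ),
    MeasureTheory.IsProbabilityMeasure γ ∧ IsCoupling γ μ ν ∧ r = ∫ p, |p.1 - p.2| ∂γ }

open Filter ProbabilityTheory
open scoped symmDiff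

lemma mcdf_nonneg (ν : Measure ℝ) (t : ℝ) : 0 ≤ mcdf ν t := ENNReal.toReal_nonneg

section CDF

variable (ν : Measure ℝ) [IsProbabilityMeasure ν]

lemma mcdf_eq_cdf : mcdf ν = cdf ν := by
  ext t
  rw [mcdf, cdf_eq_real, measureReal_def]

lemma mcdf_le_one (t : ℝ) : mcdf ν t ≤ 1 := by
  rw [mcdf_eq_cdf]
  exact cdf_le_one ν t

lemma monotone_mcdf : Monotone (mcdf ν) := by
  rw [mcdf_eq_cdf]
  exact monotone_cdf ν

lemma measurable_mcdf : Measurable (mcdf ν) := (monotone_mcdf ν).measurable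

lemma mlcdf_eq_leftLim_cdf : mlcdf ν = Function.leftLim (cdf ν) := by
  ext t
  have h := (cdf ν).measure_Iio (tendsto_cdf_atBot ν) t
  rw [measure_cdf, sub_zero] at h
  rw [mlcdf, h, ENNReal.toReal_ofReal]
  exact (cdf_nonneg ν (t - 1)).trans ((monotone_cdf ν).le_leftLim (by linarith))

lemma measurable_mlcdf : Measurable (mlcdf ν) := by
  rw [mlcdf_eq_leftLim_cdf]
  exact (monotone_cdf ν).leftLim.measurable

lemma mlcdf_mem_Icc (t : ℝ) : mlcdf ν t ∈ Icc (0 : ℝ) 1 := by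
  rw [mlcdf_eq_leftLim_cdf]
  exact ⟨(cdf_nonneg ν (t - 1)).trans ((monotone_cdf ν).le_leftLim (by linarith)),
    ((monotone_cdf ν).leftLim_le le_rfl).trans (cdf_le_one ν t)⟩

end CDF

lemma mcdf_eq_mlcdf {ν : Measure ℝ} (h : ∀ x, ν {x} = 0) : mcdf ν = mlcdf ν := by
  ext t
  rw [mcdf, mlcdf, measure_congr (Iio_ae_eq_Iic' (h t))]

lemma mcdf_eq_zero_of_ae_lt {ν : Measure ℝ} {t : ℝ} (h : ∀ᵐ x ∂ν, t < x) : mcdf ν t = 0 := by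
  have h' : ν (Iic t) = 0 := measure_eq_zero_iff_ae_notMem.mpr (h.mono fun _ => not_le.mpr)
  rw [mcdf, h', ENNReal.toReal_zero]

lemma mcdf_eq_one_of_ae_le {ν : Measure ℝ} [IsProbabilityMeasure ν] {t : ℝ}
    (h : ∀ᵐ x ∂ν, x ≤ t) : mcdf ν t = 1 := by
  have h' : ν (Iic t) = 1 := (prob_compl_eq_zero_iff measurableSet_Iic).mp (ae_iff.mp h)
  rw [mcdf, h', ENNReal.toReal_one]

lemma mcdf_map {Ω : Type*} [MeasurableSpace Ω] (P : Measure Ω) {Z : Ω → ℝ} (hZ : Measurable Z)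
    (t : ℝ) : mcdf (P.map Z) t = (P {ω | Z ω ≤ t}).toReal := by
  rw [mcdf, Measure.map_apply hZ measurableSet_Iic]
  rfl

instance : IsProbabilityMeasure (volume.restrict (Ioo (0 : ℝ) 1)) := ⟨by simp⟩

lemma volume_restrict_Ioo_Ioc {a b : ℝ} (ha : 0 ≤ a) (hb : b ≤ 1) :
    volume.restrict (Ioo (0 : ℝ) 1) (Ioc a b) = ENNReal.ofReal (b - a) := by
  rw [Measure.restrict_congr_set Ioo_ae_eq_Ioc, Measure.restrict_apply measurableSet_Ioc,
    Ioc_inter_Ioc, sup_eq_left.mpr ha, inf_eq_left.mpr hb, Real.volume_Ioc]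

/-- Meaningful only on `(0, 1)`: below `0` the infimum is over an unbounded set and above `1`
over the empty set, so the values there are junk. -/
noncomputable def quantile (ν : Measure ℝ) (u : ℝ) : ℝ := sInf {t | u ≤ mcdf ν t}

section Quantile

variable (ν : Measure ℝ) [IsProbabilityMeasure ν] {u : ℝ}

lemma nonempty_setOf_le_mcdf (hu : u < 1) : {t | u ≤ mcdf ν t}.Nonempty := by
  rw [mcdf_eq_cdf]
  exact ((tendsto_cdf_atTop ν).eventually (eventually_ge_nhds hu)).exists

lemma bddBelow_setOf_le_mcdf (hu : 0 < u) : BddBelow {t | u ≤ mcdf ν t} := by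
  rw [mcdf_eq_cdf]
  obtain ⟨s, hs⟩ := ((tendsto_cdf_atBot ν).eventually (eventually_lt_nhds hu)).exists
  exact ⟨s, fun t ht => le_of_not_gt fun hts => (hs.trans_le' ((monotone_cdf ν) hts.le)).not_ge ht⟩

lemma le_mcdf_quantile (hu : u ∈ Ioo (0 : ℝ) 1) : u ≤ mcdf ν (quantile ν u) := by
  rw [mcdf_eq_cdf]
  refine ge_of_tendsto (((cdf ν).right_continuous _).mono Ioi_subset_Ici_self)
    (eventually_nhdsWithin_of_forall fun t ht => ?_)
  obtain ⟨s, hs, hst⟩ := exists_lt_of_csInf_lt (nonempty_setOf_le_mcdf ν hu.2) ht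
  exact (mcdf_eq_cdf ν ▸ hs : u ≤ cdf ν s).trans ((monotone_cdf ν) hst.le)

lemma quantile_le_iff (hu : u ∈ Ioo (0 : ℝ) 1) (t : ℝ) : quantile ν u ≤ t ↔ u ≤ mcdf ν t :=
  ⟨fun h => (le_mcdf_quantile ν hu).trans (monotone_mcdf ν h),
    fun h => csInf_le (bddBelow_setOf_le_mcdf ν hu.1) h⟩

lemma monotoneOn_quantile : MonotoneOn (quantile ν) (Ioo 0 1) := fun _ hu _ hv huv =>
  (quantile_le_iff ν hu _).mpr (huv.trans (le_mcdf_quantile ν hv))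

lemma aemeasurable_quantile : AEMeasurable (quantile ν) (volume.restrict (Ioo 0 1)) :=
  aemeasurable_restrict_of_monotoneOn measurableSet_Ioo (monotoneOn_quantile ν)

lemma map_quantile : (volume.restrict (Ioo 0 1)).map (quantile ν) = ν := by
  refine Measure.ext_of_Iic _ _ fun t => ?_
  have hset : quantile ν ⁻¹' Iic t =ᵐ[volume.restrict (Ioo 0 1)] Ioc 0 (mcdf ν t) := by
    refine eventuallyEq_set.mpr ?_
    filter_upwards [ae_restrict_mem measurableSet_Ioo] with u hu
    simp only [mem_preimage, mem_Iic, mem_Ioc, quantile_le_iff ν hu, hu.1, true_and]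
  rw [Measure.map_apply_of_aemeasurable (aemeasurable_quantile ν) measurableSet_Iic,
    measure_congr hset, volume_restrict_Ioo_Ioc le_rfl (mcdf_le_one ν t), sub_zero, mcdf,
    ENNReal.ofReal_toReal (measure_ne_top _ _)]

lemma mlcdf_le_of_le_quantile (hu : u ∈ Ioo (0 : ℝ) 1) {z : ℝ} (hz : z ≤ quantile ν u) :
    mlcdf ν z ≤ u := by
  rw [mlcdf_eq_leftLim_cdf]
  refine le_of_tendsto ((monotone_cdf ν).tendsto_leftLim z)
    (eventually_nhdsWithin_of_forall fun t ht => ?_)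
  rw [← mcdf_eq_cdf]
  exact le_of_lt <| not_le.mp fun h =>
    (lt_of_lt_of_le ht hz).not_ge ((quantile_le_iff ν hu t).mpr h)

lemma le_mlcdf_of_quantile_lt (hu : u ∈ Ioo (0 : ℝ) 1) {z : ℝ} (hz : quantile ν u < z) :
    u ≤ mlcdf ν z := by
  rw [mlcdf_eq_leftLim_cdf, ← mcdf_eq_cdf]
  exact (le_mcdf_quantile ν hu).trans ((monotone_mcdf ν).le_leftLim hz)

end Quantile

lemma ae_measure_singleton_eq_zero (ρ : Measure ℝ) [SFinite ρ] (m : Measure ℝ)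
    [NullSingletonClass m] :
    ∀ᵐ u ∂m, ρ {u} = 0 := by
  refine measure_mono_null (fun u hu => ?_)
    ((Measure.countable_meas_level_set_pos (μ := ρ) measurable_id).measure_zero m)
  simpa [pos_iff_ne_zero, ofPred_eq_eq_singleton] using hu

section Transfer

variable (μ : Measure ℝ) [IsProbabilityMeasure μ]

lemma mcdf_map_mlcdf (ρ : Measure ℝ) {u : ℝ} (hu : u ∈ Ioo (0 : ℝ) 1)
    (hatom : ρ.map (mlcdf μ) {u} = 0) :
    mcdf (ρ.map (mlcdf μ)) u = mcdf ρ (quantile μ u) := by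
  rw [Measure.map_apply (measurable_mlcdf μ) (measurableSet_singleton u)] at hatom
  have hset : mlcdf μ ⁻¹' Iic u =ᵐ[ρ] Iic (quantile μ u) := by
    refine eventuallyEq_set.mpr ?_
    filter_upwards [measure_eq_zero_iff_ae_notMem.mp hatom] with z hz
    exact ⟨fun h => le_of_not_gt fun hlt => hz (le_antisymm h (le_mlcdf_of_quantile_lt μ hu hlt)),
      mlcdf_le_of_le_quantile μ hu⟩
  rw [mcdf, mcdf, Measure.map_apply (measurable_mlcdf μ) measurableSet_Iic, measure_congr hset]

lemma integral_abs_sub_mcdf_eq_setIntegral_map_mlcdf (ρ₀ ρ₁ : Measure ℝ)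
    [IsProbabilityMeasure ρ₀] [IsProbabilityMeasure ρ₁] :
    ∫ t, |mcdf ρ₀ t - mcdf ρ₁ t| ∂μ
      = ∫ u in Ioo 0 1, |mcdf (ρ₀.map (mlcdf μ)) u - mcdf (ρ₁.map (mlcdf μ)) u| := by
  have hg : AEStronglyMeasurable (fun t => |mcdf ρ₀ t - mcdf ρ₁ t|) μ :=
    ((measurable_mcdf ρ₀).sub (measurable_mcdf ρ₁)).abs.aestronglyMeasurable
  calc ∫ t, |mcdf ρ₀ t - mcdf ρ₁ t| ∂μ
      = ∫ u in Ioo 0 1, |mcdf ρ₀ (quantile μ u) - mcdf ρ₁ (quantile μ u)| := by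
        conv_lhs => rw [← map_quantile μ]
        exact integral_map (aemeasurable_quantile μ) (by rwa [map_quantile μ])
    _ = _ := by
        refine integral_congr_ae ?_
        filter_upwards [ae_restrict_mem measurableSet_Ioo,
          ae_measure_singleton_eq_zero (ρ₀.map (mlcdf μ)) (volume.restrict (Ioo 0 1)),
          ae_measure_singleton_eq_zero (ρ₁.map (mlcdf μ)) (volume.restrict (Ioo 0 1))]
          with u hu h₀ h₁
        rw [mcdf_map_mlcdf μ ρ₀ hu h₀, mcdf_map_mlcdf μ ρ₁ hu h₁]

end Transfer

lemma Ici_symmDiff_Ici {α : Type*} [LinearOrder α] (a b : α) :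
    Ici a ∆ Ici b = Ico (min a b) (max a b) := by
  ext x
  simp only [mem_symmDiff, mem_Ici, mem_Ico, min_le_iff, lt_max_iff, not_le]
  grind

lemma Iic_symmDiff_Iic {α : Type*} [LinearOrder α] (a b : α) :
    Iic a ∆ Iic b = Ioc (min a b) (max a b) := by
  ext x
  simp only [mem_symmDiff, mem_Iic, mem_Ioc, min_lt_iff, le_max_iff, not_le]
  grind

lemma lintegral_ofReal_abs_sub_eq_lintegral_measure_symmDiff (γ : Measure (ℝ × ℝ)) [SFinite γ] :
    ∫⁻ p, ENNReal.ofReal |p.1 - p.2| ∂γ = ∫⁻ t, γ ({p | p.1 ≤ t} ∆ {p | p.2 ≤ t}) := by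
  have hE : MeasurableSet ({q : (ℝ × ℝ) × ℝ | q.1.1 ≤ q.2} ∆ {q | q.1.2 ≤ q.2}) :=
    (measurableSet_le measurable_fst.fst measurable_snd).symmDiff
      (measurableSet_le measurable_fst.snd measurable_snd)
  calc ∫⁻ p, ENNReal.ofReal |p.1 - p.2| ∂γ = ∫⁻ p, volume (Ici p.1 ∆ Ici p.2) ∂γ := by
        simp_rw [Ici_symmDiff_Ici, Real.volume_Ico, max_sub_min_eq_abs']
    _ = γ.prod volume ({q : (ℝ × ℝ) × ℝ | q.1.1 ≤ q.2} ∆ {q | q.1.2 ≤ q.2}) :=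
        (Measure.prod_apply hE).symm
    _ = _ := Measure.prod_apply_symm hE

section Coupling

variable {γ : Measure (ℝ × ℝ)} {ν₀ ν₁ : Measure ℝ}

lemma ofReal_abs_sub_mcdf_le_measure_symmDiff [IsFiniteMeasure γ] (hγ : IsCoupling γ ν₀ ν₁)
    (t : ℝ) : ENNReal.ofReal |mcdf ν₀ t - mcdf ν₁ t| ≤ γ ({p | p.1 ≤ t} ∆ {p | p.2 ≤ t}) := by
  obtain ⟨rfl, rfl⟩ := hγ
  rw [mcdf, mcdf, Measure.map_apply measurable_fst measurableSet_Iic,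
    Measure.map_apply measurable_snd measurableSet_Iic]
  exact ENNReal.ofReal_le_of_le_toReal (abs_measureReal_sub_le_measureReal_symmDiff
    (measurable_fst measurableSet_Iic).nullMeasurableSet
    (measurable_snd measurableSet_Iic).nullMeasurableSet)

lemma lintegral_ofReal_abs_sub_mcdf_le [IsFiniteMeasure γ] (hγ : IsCoupling γ ν₀ ν₁) :
    ∫⁻ t, ENNReal.ofReal |mcdf ν₀ t - mcdf ν₁ t| ≤ ∫⁻ p, ENNReal.ofReal |p.1 - p.2| ∂γ := by
  rw [lintegral_ofReal_abs_sub_eq_lintegral_measure_symmDiff]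
  exact lintegral_mono (ofReal_abs_sub_mcdf_le_measure_symmDiff hγ)

lemma integrable_abs_sub_of_isCoupling (hγ : IsCoupling γ ν₀ ν₁) (h₀ : Integrable id ν₀)
    (h₁ : Integrable id ν₁) : Integrable (fun p : ℝ × ℝ => |p.1 - p.2|) γ := by
  obtain ⟨rfl, rfl⟩ := hγ
  have h₀' := (integrable_map_measure aestronglyMeasurable_id measurable_fst.aemeasurable).mp h₀
  have h₁' := (integrable_map_measure aestronglyMeasurable_id measurable_snd.aemeasurable).mp h₁
  exact (h₀'.sub h₁').abs

end Coupling

noncomputable def quantileCoupling (ν₀ ν₁ : Measure ℝ) : Measure (ℝ × ℝ) :=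
  (volume.restrict (Ioo 0 1)).map fun u => (quantile ν₀ u, quantile ν₁ u)

section QuantileCoupling

variable (ν₀ ν₁ : Measure ℝ) [IsProbabilityMeasure ν₀] [IsProbabilityMeasure ν₁]

lemma aemeasurable_quantile_prodMk :
    AEMeasurable (fun u => (quantile ν₀ u, quantile ν₁ u)) (volume.restrict (Ioo 0 1)) :=
  (aemeasurable_quantile ν₀).prodMk (aemeasurable_quantile ν₁)

instance : IsProbabilityMeasure (quantileCoupling ν₀ ν₁) :=
  Measure.isProbabilityMeasure_map (aemeasurable_quantile_prodMk ν₀ ν₁)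

lemma isCoupling_quantileCoupling : IsCoupling (quantileCoupling ν₀ ν₁) ν₀ ν₁ := by
  constructor
  · rw [quantileCoupling, AEMeasurable.map_map_of_aemeasurable measurable_fst.aemeasurable
      (aemeasurable_quantile_prodMk ν₀ ν₁)]
    exact map_quantile ν₀
  · rw [quantileCoupling, AEMeasurable.map_map_of_aemeasurable measurable_snd.aemeasurable
      (aemeasurable_quantile_prodMk ν₀ ν₁)]
    exact map_quantile ν₁

lemma quantileCoupling_symmDiff (t : ℝ) :
    quantileCoupling ν₀ ν₁ ({p | p.1 ≤ t} ∆ {p | p.2 ≤ t})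
      = ENNReal.ofReal |mcdf ν₀ t - mcdf ν₁ t| := by
  have hset : (fun u => (quantile ν₀ u, quantile ν₁ u)) ⁻¹' ({p | p.1 ≤ t} ∆ {p | p.2 ≤ t})
      =ᵐ[volume.restrict (Ioo 0 1)] (Iic (mcdf ν₀ t) ∆ Iic (mcdf ν₁ t) : Set ℝ) := by
    refine eventuallyEq_set.mpr ?_
    filter_upwards [ae_restrict_mem measurableSet_Ioo] with u hu
    simp only [mem_preimage, mem_symmDiff, mem_ofPred_eq, mem_Iic, quantile_le_iff _ hu]
  rw [quantileCoupling, Measure.map_apply_of_aemeasurable (aemeasurable_quantile_prodMk ν₀ ν₁)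
      ((measurableSet_le measurable_fst measurable_const).symmDiff
        (measurableSet_le measurable_snd measurable_const)),
    measure_congr hset, Iic_symmDiff_Iic,
    volume_restrict_Ioo_Ioc (le_min (mcdf_nonneg ν₀ t) (mcdf_nonneg ν₁ t))
      (max_le (mcdf_le_one ν₀ t) (mcdf_le_one ν₁ t)), max_sub_min_eq_abs']

lemma lintegral_quantileCoupling :
    ∫⁻ p, ENNReal.ofReal |p.1 - p.2| ∂quantileCoupling ν₀ ν₁
      = ∫⁻ t, ENNReal.ofReal |mcdf ν₀ t - mcdf ν₁ t| := by
  simp_rw [lintegral_ofReal_abs_sub_eq_lintegral_measure_symmDiff, quantileCoupling_symmDiff]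

end QuantileCoupling

section Wasserstein

variable {ν₀ ν₁ : Measure ℝ} [IsProbabilityMeasure ν₀] [IsProbabilityMeasure ν₁]

theorem W1_eq_integral_abs_sub_mcdf (h₀ : Integrable id ν₀) (h₁ : Integrable id ν₁) :
    W1 ν₀ ν₁ = ∫ t, |mcdf ν₀ t - mcdf ν₁ t| := by
  have hcost (γ : Measure (ℝ × ℝ)) :
      ∫ p, |p.1 - p.2| ∂γ = (∫⁻ p, ENNReal.ofReal |p.1 - p.2| ∂γ).toReal :=
    integral_eq_lintegral_of_nonneg_ae (ae_of_all _ fun _ => abs_nonneg _)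
      (continuous_fst.sub continuous_snd).abs.aestronglyMeasurable
  have hcdf : ∫ t, |mcdf ν₀ t - mcdf ν₁ t|
      = (∫⁻ t, ENNReal.ofReal |mcdf ν₀ t - mcdf ν₁ t|).toReal :=
    integral_eq_lintegral_of_nonneg_ae (ae_of_all _ fun _ => abs_nonneg _)
      ((measurable_mcdf ν₀).sub (measurable_mcdf ν₁)).abs.aestronglyMeasurable
  refine IsLeast.csInf_eq ⟨⟨quantileCoupling ν₀ ν₁, inferInstance,
    isCoupling_quantileCoupling ν₀ ν₁, by rw [hcost, lintegral_quantileCoupling, hcdf]⟩, ?_⟩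
  rintro _ ⟨γ, _, hγ, rfl⟩
  rw [hcdf, hcost]
  exact ENNReal.toReal_mono (integrable_abs_sub_of_isCoupling hγ h₀ h₁).lintegral_lt_top.ne
    (lintegral_ofReal_abs_sub_mcdf_le hγ)

theorem W1_eq_setIntegral_Ioo_of_ae_mem_Icc (h₀ : ∀ᵐ x ∂ν₀, x ∈ Icc (0 : ℝ) 1)
    (h₁ : ∀ᵐ x ∂ν₁, x ∈ Icc (0 : ℝ) 1) :
    W1 ν₀ ν₁ = ∫ t in Ioo 0 1, |mcdf ν₀ t - mcdf ν₁ t| := by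
  -- `Ico`, not `Ioo`: atoms at `0` may make the two CDFs differ there.
  have hcdf (t : ℝ) (ht : t ∉ Ico (0 : ℝ) 1) : |mcdf ν₀ t - mcdf ν₁ t| = 0 := by
    rcases lt_or_ge t 0 with ht₀ | ht₀
    · rw [mcdf_eq_zero_of_ae_lt (h₀.mono fun x hx => ht₀.trans_le hx.1),
        mcdf_eq_zero_of_ae_lt (h₁.mono fun x hx => ht₀.trans_le hx.1), sub_zero, abs_zero]
    · have ht₁ : 1 ≤ t := le_of_not_gt fun h => ht ⟨ht₀, h⟩
      rw [mcdf_eq_one_of_ae_le (h₀.mono fun x hx => hx.2.trans ht₁),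
        mcdf_eq_one_of_ae_le (h₁.mono fun x hx => hx.2.trans ht₁), sub_self, abs_zero]
  rw [W1_eq_integral_abs_sub_mcdf (.of_mem_Icc 0 1 aemeasurable_id h₀)
      (.of_mem_Icc 0 1 aemeasurable_id h₁),
    ← setIntegral_eq_integral_of_forall_compl_eq_zero hcdf, integral_Ico_eq_integral_Ioo]

end Wasserstein

/-- `∫ |F_{Z0}(t) − F_{Z1}(t)| μ(dt)` equals the `L¹` distance of the
CDFs of `F̃_μ(Z0)` and `F̃_μ(Z1)` on `(0,1)`, which equals the Wasserstein-1 distance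
between the laws of `F̃_μ(Z0)` and `F̃_μ(Z1)`; if `μ` is atomless, it also equals
`W₁(P_{F_μ(Z0)}, P_{F_μ(Z1)})`. -/
theorem stmt_16 {Ω : Type*} [MeasurableSpace Ω] (P : MeasureTheory.Measure Ω)
    [MeasureTheory.IsProbabilityMeasure P]
    (Z0 Z1 : Ω → ℝ) (hZ0 : Measurable Z0) (hZ1 : Measurable Z1)
    (μ : MeasureTheory.Measure ℝ) [MeasureTheory.IsProbabilityMeasure μ] :
    (∫ t, |(P {ω | Z0 ω ≤ t}).toReal - (P {ω | Z1 ω ≤ t}).toReal| ∂μ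
      = ∫ q in (0 : ℝ)..1,
          |(P {ω | mlcdf μ (Z0 ω) ≤ q}).toReal - (P {ω | mlcdf μ (Z1 ω) ≤ q}).toReal|)
    ∧ (∫ t, |(P {ω | Z0 ω ≤ t}).toReal - (P {ω | Z1 ω ≤ t}).toReal| ∂μ
      = W1 (P.map (fun ω => mlcdf μ (Z0 ω))) (P.map (fun ω => mlcdf μ (Z1 ω))))
    ∧ ((∀ x : ℝ, μ {x} = 0) →
        ∫ t, |(P {ω | Z0 ω ≤ t}).toReal - (P {ω | Z1 ω ≤ t}).toReal| ∂μ
          = W1 (P.map (fun ω => mcdf μ (Z0 ω))) (P.map (fun ω => mcdf μ (Z1 ω)))) := by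
  have hm0 : Measurable fun ω => mlcdf μ (Z0 ω) := (measurable_mlcdf μ).comp hZ0
  have hm1 : Measurable fun ω => mlcdf μ (Z1 ω) := (measurable_mlcdf μ).comp hZ1
  have := Measure.isProbabilityMeasure_map (μ := P) hZ0.aemeasurable
  have := Measure.isProbabilityMeasure_map (μ := P) hZ1.aemeasurable
  have := Measure.isProbabilityMeasure_map (μ := P) hm0.aemeasurable
  have := Measure.isProbabilityMeasure_map (μ := P) hm1.aemeasurable
  have hmem (Z : Ω → ℝ) (hZ : Measurable Z) :
      ∀ᵐ x ∂P.map (fun ω => mlcdf μ (Z ω)), x ∈ Icc (0 : ℝ) 1 :=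
    (ae_map_iff ((measurable_mlcdf μ).comp hZ).aemeasurable measurableSet_Icc).mpr
      (ae_of_all _ fun ω => mlcdf_mem_Icc μ (Z ω))
  have key : ∫ t, |(P {ω | Z0 ω ≤ t}).toReal - (P {ω | Z1 ω ≤ t}).toReal| ∂μ
      = ∫ u in Ioo 0 1, |mcdf (P.map fun ω => mlcdf μ (Z0 ω)) u
          - mcdf (P.map fun ω => mlcdf μ (Z1 ω)) u| := by
    simpa only [mcdf_map P hZ0, mcdf_map P hZ1, Measure.map_map (measurable_mlcdf μ) hZ0,
      Measure.map_map (measurable_mlcdf μ) hZ1, Function.comp_def]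
      using integral_abs_sub_mcdf_eq_setIntegral_map_mlcdf μ (P.map Z0) (P.map Z1)
  refine ⟨?_, ?_, fun hμ => ?_⟩
  · rw [key, intervalIntegral.integral_of_le zero_le_one, integral_Ioc_eq_integral_Ioo]
    simp only [mcdf_map P hm0, mcdf_map P hm1]
  · rw [key, W1_eq_setIntegral_Ioo_of_ae_mem_Icc (hmem Z0 hZ0) (hmem Z1 hZ1)]
  · rw [mcdf_eq_mlcdf hμ, key, W1_eq_setIntegral_Ioo_of_ae_mem_Icc (hmem Z0 hZ0) (hmem Z1 hZ1)]
end
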